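/- Let V be a type, C a finite index set of configurations with weights w : C → ℝ satisfying w(c) ≥ 0 for all c and ∑_{c ∈ C} w(c) = 1, and for each c ∈ C let 𝒫_c be a finite family of pairwise disjoint, nonempty finite subsets of V, with L_c(T) denoting the number of members of 𝒫_c contained in T. Then for every nonempty finite subset S of V, the derivative at τ = 1 of the function τ ↦ ∑_{c ∈ C} w(c) · ∑_{T ⊆ S} (−1)^{|S|−|T|} · τ^{L_c(T)} equals ∑_{c ∈ C, S ∈ 𝒫_c} w(c), i.e. the total weight of configurations in which S is a member of 𝒫_c (the 'hit chance' of S). -/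

import Mathlib

/-!
Differentiating at `τ = 1` replaces `τ ^ L_c(T)` by `L_c(T) = ∑_{P ∈ 𝒫_c} [P ⊆ T]`. After swapping
the sums, each `P` contributes `∑_{P ⊆ T ⊆ S} (-1) ^ (|S| - |T|)`, the Möbius function of the
Boolean lattice, which is `1` if `P = S` and `0` otherwise.
-/

open Finset

namespace Finset

variable {α R : Type*} [DecidableEq α] [CommRing R]

theorem sum_powerset_neg_one_pow_card_sub (s : Finset α) :
    ∑ t ∈ s.powerset, (-1 : R) ^ (#s - #t) = if s = ∅ then 1 else 0 := by
  have h := prod_add (fun _ ↦ (1 : R)) (fun _ ↦ -1) s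
  simp only [add_neg_cancel, prod_const, one_pow, one_mul, zero_pow_eq, card_eq_zero] at h
  rw [h]
  refine sum_congr rfl fun t ht ↦ ?_
  rw [card_sdiff_of_subset (mem_powerset.1 ht)]

theorem sum_Icc_neg_one_pow_card_sub (s t : Finset α) :
    ∑ u ∈ Icc s t, (-1 : R) ^ (#t - #u) = if s = t then 1 else 0 := by
  by_cases hst : s ⊆ t
  · have hinj : Set.InjOn (s ∪ ·) ((t \ s).powerset : Set (Finset α)) := fun u hu v hv huv ↦ by
      simp only [coe_powerset, Set.mem_preimage, Set.mem_powerset_iff, coe_subset] at hu hv huv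
      rw [← sdiff_eq_self_of_disjoint (disjoint_of_subset_left hu sdiff_disjoint),
        ← sdiff_eq_self_of_disjoint (disjoint_of_subset_left hv sdiff_disjoint),
        ← union_sdiff_left, huv, union_sdiff_left]
    rw [Icc_eq_image_powerset hst, sum_image hinj]
    have hcard : ∀ u ∈ (t \ s).powerset, #t - #(s ∪ u) = #(t \ s) - #u := fun u hu ↦ by
      have hdisj : Disjoint s u := (disjoint_of_subset_left (mem_powerset.1 hu) sdiff_disjoint).symm
      have := card_le_card (mem_powerset.1 hu)
      rw [card_union_of_disjoint hdisj, card_sdiff_of_subset hst] at *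
      omega
    rw [sum_congr rfl fun u hu ↦ by rw [hcard u hu], sum_powerset_neg_one_pow_card_sub]
    simp only [sdiff_eq_empty_iff_subset]
    exact if_congr ⟨hst.antisymm, fun h ↦ h ▸ subset_rfl⟩ rfl rfl
  · rw [Icc_eq_empty (by simpa using hst), sum_empty, if_neg (by rintro rfl; exact hst subset_rfl)]

theorem sum_powerset_neg_one_pow_card_sub_mul_card_filter_subset (P : Finset (Finset α))
    (s : Finset α) :
    ∑ t ∈ s.powerset, (-1 : R) ^ (#s - #t) * #{p ∈ P | p ⊆ t} = if s ∈ P then 1 else 0 := by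
  simp_rw [card_filter, Nat.cast_sum, mul_sum, Nat.cast_ite, Nat.cast_one, Nat.cast_zero,
    mul_ite, mul_one, mul_zero]
  rw [sum_comm]
  simp_rw [← sum_filter, ← Icc_eq_filter_powerset, sum_Icc_neg_one_pow_card_sub, sum_ite_eq']

end Finset

theorem hasDerivAt_sum_mul_pow {ι 𝕜 : Type*} [NontriviallyNormedField 𝕜] (s : Finset ι)
    (a : ι → 𝕜) (n : ι → ℕ) (x : 𝕜) :
    HasDerivAt (fun x ↦ ∑ i ∈ s, a i * x ^ n i) (∑ i ∈ s, a i * (n i * x ^ (n i - 1))) x :=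
  HasDerivAt.fun_sum fun i _ ↦ (hasDerivAt_pow (n i) x).const_mul (a i)

theorem stmt1_general {V : Type*} [DecidableEq V] {C : Type*} [Fintype C]
    (w : C → ℝ)
    (Ps : C → Finset (Finset V))
    (S : Finset V) :
    deriv (fun τ : ℝ => ∑ c, w c * ∑ T ∈ S.powerset,
        (-1 : ℝ) ^ (S.card - T.card) * τ ^ (((Ps c).filter fun P => P ⊆ T).card)) 1
      = ∑ c ∈ Finset.univ.filter (fun c => S ∈ Ps c), w c := by
  have hderiv := HasDerivAt.fun_sum (u := univ) fun c _ ↦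
    (hasDerivAt_sum_mul_pow S.powerset (fun T ↦ (-1 : ℝ) ^ (#S - #T))
      (fun T ↦ #{P ∈ Ps c | P ⊆ T}) 1).const_mul (w c)
  rw [hderiv.deriv]
  simp_rw [one_pow, mul_one, sum_powerset_neg_one_pow_card_sub_mul_card_filter_subset, mul_ite,
    mul_one, mul_zero, sum_filter]

/-- Weighted ensemble version: the derivative at `τ = 1` of the weighted
alternating sum equals the total weight of configurations in which `S` is a
cluster surface (the "hit chance" of `S`). -/
theorem stmt1 {V : Type*} [DecidableEq V] {C : Type*} [Fintype C] [DecidableEq C]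
    (w : C → ℝ) (hw : ∀ c, 0 ≤ w c) (hw1 : ∑ c, w c = 1)
    (Ps : C → Finset (Finset V))
    (hdisj : ∀ c, ((Ps c : Set (Finset V))).Pairwise fun P Q => Disjoint P Q)
    (hne : ∀ c, ∀ P ∈ Ps c, P.Nonempty)
    (S : Finset V) (hS : S.Nonempty) :
    deriv (fun τ : ℝ => ∑ c, w c * ∑ T ∈ S.powerset,
        (-1 : ℝ) ^ (S.card - T.card) * τ ^ (((Ps c).filter fun P => P ⊆ T).card)) 1
      = ∑ c ∈ Finset.univ.filter (fun c => S ∈ Ps c), w c :=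
  stmt1_general w Ps S
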